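/- arXiv:2409.04721 — 2 statements merged into one kernel-verified Lean document; each statement's English description precedes it below -/
import Mathlib

section
/- If K and G are 2×2 block operator matrices such that G is block-diagonal and K lies in the set S_τ of matrices of the form [[e^{-sτ1}K11, e^{-sτ2}K12],[e^{-sτ2}K21, e^{-sτ1}K22]] with 2τ1 > τ2 > τ1 > 0, then the product K G K again lies in S_τ (i.e., each (i,j) entry of KGK carries a delay at least that prescribed by S_τ); hence S_τ is quadratically invariant under block-diagonal G. -/
/-- Quadratic invariance of the delayed controller class `S_τ` under a
block-diagonal plant `G`: entries of transfer matrices live in a commutative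
ring `R` graded by a delay predicate `hasDelay`.  If `K` has diagonal delays
at least `τ1` and off-diagonal delays at least `τ2`, with `0 < τ1 < τ2 < 2τ1`,
and `G` is block-diagonal (off-diagonal entries zero), then `K * G * K`
again lies in `S_τ`. -/
theorem quadratic_invariance_Stau
    {R : Type*} [CommRing R]
    (hasDelay : ℝ → R → Prop)
    (hmul : ∀ (a b : ℝ) (x y : R), hasDelay a x → hasDelay b y →
      hasDelay (a + b) (x * y))
    (hadd : ∀ (a : ℝ) (x y : R), hasDelay a x → hasDelay a y → hasDelay a (x + y))
    (hmono : ∀ (a b : ℝ) (x : R), a ≤ b → hasDelay b x → hasDelay a x)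
    (hzero : ∀ x : R, hasDelay 0 x)
    (τ1 τ2 : ℝ) (hτ1pos : 0 < τ1) (hτ12 : τ1 < τ2) (hτ2 : τ2 < 2 * τ1)
    (K G : Matrix (Fin 2) (Fin 2) R)
    (hG : ∀ i j : Fin 2, i ≠ j → G i j = 0)
    (hKdiag : ∀ i : Fin 2, hasDelay τ1 (K i i))
    (hKoff : ∀ i j : Fin 2, i ≠ j → hasDelay τ2 (K i j)) :
    (∀ i : Fin 2, hasDelay τ1 ((K * G * K) i i)) ∧
    (∀ i j : Fin 2, i ≠ j → hasDelay τ2 ((K * G * K) i j)) := by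
  -- every entry of K has delay at least τ1
  have hK1 : ∀ i k : Fin 2, hasDelay τ1 (K i k) := by
    intro i k
    by_cases h : i = k
    · subst h; exact hKdiag i
    · exact hmono _ _ _ hτ12.le (hKoff i k h)
  -- entries of KGK are sums of terms K i k * G k k * K k j
  have hentry : ∀ i j : Fin 2,
      (K * G * K) i j = K i 0 * G 0 0 * K 0 j + K i 1 * G 1 1 * K 1 j := by
    intro i j
    simp [Matrix.mul_apply, Fin.sum_univ_two, hG 0 1 (by decide), hG 1 0 (by decide),
      add_mul]
  -- delay of a single term
  have hterm : ∀ (a b τ : ℝ) (i k j : Fin 2), τ ≤ a + b →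
      hasDelay a (K i k) → hasDelay b (K k j) →
      hasDelay τ (K i k * G k k * K k j) := by
    intro a b τ i k j hle ha hb
    have := hmul (a + 0) b (K i k * G k k) (K k j) (hmul a 0 (K i k) (G k k) ha (hzero _)) hb
    exact hmono _ _ _ (by linarith) this
  constructor
  · intro i
    rw [hentry]
    exact hadd _ _ _
      (hterm τ1 τ1 τ1 i 0 i (by linarith) (hK1 i 0) (hK1 0 i))
      (hterm τ1 τ1 τ1 i 1 i (by linarith) (hK1 i 1) (hK1 1 i))
  · intro i j hij
    rw [hentry]
    -- for each k, one of the two factors is an off-diagonal entry of K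
    have hoff : ∀ k : Fin 2, hasDelay τ2 (K i k * G k k * K k j) := by
      intro k
      by_cases h : i = k
      · have hkj : k ≠ j := by rw [← h]; exact hij
        exact hterm τ1 τ2 τ2 i k j (by linarith) (h ▸ hKdiag i) (hKoff k j hkj)
      · exact hterm τ2 τ1 τ2 i k j (by linarith) (hKoff i k h) (hK1 k j)
    exact hadd _ _ _ (hoff 0) (hoff 1)
end

section
/- Under the hypotheses of the ARE Lyapunov identity, if additionally X ≻ 0 and (C+DF, A+BF) has the property that (C+DF)x = 0 and (A+BF)x = λx imply x = 0 for eigenvectors with Re λ ≥ 0, then every eigenvalue of A+BF has strictly negative real part (A+BF is Hurwitz). -/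
/-!
Substituting the gain `F` into the Riccati equation turns it into the closed-loop Lyapunov
equation `(A + BF)ᵀX + X(A + BF) + (C + DF)ᵀ(C + DF) = 0`. Testing this equation against an
eigenvector `v` of `A + BF` with eigenvalue `μ` gives `2 Re μ · v*Xv + ‖(C + DF)v‖² = 0`.
If `Re μ ≥ 0`, both terms are nonnegative, so `(C + DF)v = 0`, and detectability forces `v = 0`.
-/

open Matrix ComplexOrder

namespace Matrix

variable {ι κ : Type*} [Fintype ι] [Fintype κ]

theorem exists_mulVec_eq_smul_of_mem_spectrum [DecidableEq ι] {K : Type*} [Field K]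
    {A : Matrix ι ι K} {μ : K} (hμ : μ ∈ spectrum K A) :
    ∃ v ≠ 0, A *ᵥ v = μ • v := by
  rw [← spectrum_toLin', ← Module.End.hasEigenvalue_iff_mem_spectrum] at hμ
  obtain ⟨v, hv⟩ := hμ.exists_hasEigenvector
  exact ⟨v, hv.2, by simpa using hv.apply_eq_smul⟩

theorem star_dotProduct_lyapunov_mulVec_of_mulVec_eq_smul {R : Type*} [CommRing R] [StarRing R]
    (A X : Matrix ι ι R) (C : Matrix κ ι R) {μ : R} {v : ι → R} (hv : A *ᵥ v = μ • v) :
    star v ⬝ᵥ (Aᴴ * X + X * A + Cᴴ * C) *ᵥ v =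
      (star μ + μ) * (star v ⬝ᵥ X *ᵥ v) + star (C *ᵥ v) ⬝ᵥ C *ᵥ v := by
  simp only [add_mulVec, ← mulVec_mulVec, dotProduct_add, dotProduct_mulVec _ Aᴴ,
    dotProduct_mulVec _ Cᴴ, ← star_mulVec, hv, mulVec_smul, star_smul, smul_dotProduct,
    dotProduct_smul, smul_eq_mul, add_mul]

theorem re_lt_zero_of_mem_spectrum_of_lyapunov [DecidableEq ι] {A X : Matrix ι ι ℂ}
    {C : Matrix κ ι ℂ} (hX : X.PosSemidef) (hL : Aᴴ * X + X * A + Cᴴ * C = 0)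
    (hdetect : ∀ (μ : ℂ) (v : ι → ℂ), 0 ≤ μ.re → A *ᵥ v = μ • v → C *ᵥ v = 0 → v = 0)
    {μ : ℂ} (hμ : μ ∈ spectrum ℂ A) : μ.re < 0 := by
  obtain ⟨v, hv0, hv⟩ := exists_mulVec_eq_smul_of_mem_spectrum hμ
  by_contra! hre
  have hμμ : 0 ≤ star μ + μ := by
    rw [add_comm, Complex.star_def, Complex.add_conj]
    exact_mod_cast mul_nonneg zero_le_two hre
  have hquad := star_dotProduct_lyapunov_mulVec_of_mulVec_eq_smul A X C hv
  rw [hL, zero_mulVec, dotProduct_zero, eq_comm,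
    add_eq_zero_iff_of_nonneg (mul_nonneg hμμ (hX.dotProduct_mulVec_nonneg v))
      (dotProduct_star_self_nonneg _)] at hquad
  exact hv0 (hdetect μ v hre hv (dotProduct_star_self_eq_zero.1 hquad.2))

open scoped MatrixOrder in
theorem PosSemidef.map_ofReal {X : Matrix ι ι ℝ} (hX : X.PosSemidef) :
    (X.map (algebraMap ℝ ℂ)).PosSemidef := by
  classical
  set S := CFC.sqrt X
  have hS : Sᴴ = S := (CFC.sqrt_nonneg X).posSemidef.isHermitian
  have hXS : X = Sᴴ * S := by rw [hS, CFC.sqrt_mul_sqrt_self X hX.nonneg]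
  rw [hXS, Matrix.map_mul, conjTranspose_map _ fun _ => by simp]
  exact posSemidef_conjTranspose_mul_self _

theorem lyapunov_map_ofReal {A X : Matrix ι ι ℝ} {C : Matrix κ ι ℝ}
    (hL : Aᵀ * X + X * A + Cᵀ * C = 0) :
    (A.map (algebraMap ℝ ℂ))ᴴ * X.map (algebraMap ℝ ℂ) +
      X.map (algebraMap ℝ ℂ) * A.map (algebraMap ℝ ℂ) +
      (C.map (algebraMap ℝ ℂ))ᴴ * C.map (algebraMap ℝ ℂ) = 0 := by
  have hstar : Function.Semiconj (algebraMap ℝ ℂ) star star := fun _ => by simp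
  rw [← conjTranspose_map _ hstar, ← conjTranspose_map _ hstar, ← Matrix.map_mul,
    ← Matrix.map_mul, ← Matrix.map_mul, ← Matrix.map_add _ (map_add _),
    ← Matrix.map_add _ (map_add _), conjTranspose_eq_transpose_of_trivial,
    conjTranspose_eq_transpose_of_trivial, hL, Matrix.map_zero _ (map_zero _)]

theorem closedLoop_lyapunov_of_riccati {R : Type*} [CommRing R] {n m p : Type*} [Fintype n]
    [Fintype m] [Fintype p] [DecidableEq m] {A X : Matrix n n R} {B : Matrix n m R}
    {C : Matrix p n R} {D : Matrix p m R} {F : Matrix m n R} (hX : Xᵀ = X)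
    (hDD : IsUnit (Dᵀ * D).det)
    (hARE : Aᵀ * X + X * A + Cᵀ * C -
      (X * B + Cᵀ * D) * (Dᵀ * D)⁻¹ * (Bᵀ * X + Dᵀ * C) = 0)
    (hF : F = -((Dᵀ * D)⁻¹ * (Bᵀ * X + Dᵀ * C))) :
    (A + B * F)ᵀ * X + X * (A + B * F) + (C + D * F)ᵀ * (C + D * F) = 0 := by
  have hGT : ((Dᵀ * D)⁻¹)ᵀ = (Dᵀ * D)⁻¹ := by
    rw [transpose_nonsing_inv, transpose_mul, transpose_transpose]
  calc (A + B * F)ᵀ * X + X * (A + B * F) + (C + D * F)ᵀ * (C + D * F)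
      = (Aᵀ * X + X * A + Cᵀ * C - (X * B + Cᵀ * D) * (Dᵀ * D)⁻¹ * (Bᵀ * X + Dᵀ * C))
          + (X * B + Cᵀ * D) * ((Dᵀ * D)⁻¹ * (Dᵀ * D) - 1) *
            ((Dᵀ * D)⁻¹ * (Bᵀ * X + Dᵀ * C)) := by
        subst hF
        simp only [transpose_add, transpose_mul, transpose_neg, hX, hGT, transpose_transpose,
          Matrix.mul_add, Matrix.add_mul, Matrix.mul_neg, Matrix.neg_mul, Matrix.mul_one,
          Matrix.mul_sub, Matrix.sub_mul, Matrix.mul_assoc]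
        abel
    _ = 0 := by
        rw [hARE, nonsing_inv_mul _ hDD, sub_self, Matrix.mul_zero, Matrix.zero_mul, add_zero]

end Matrix

theorem are_closed_loop_hurwitz_general
    {n m p : ℕ}
    (A : Matrix (Fin n) (Fin n) ℝ) (B : Matrix (Fin n) (Fin m) ℝ)
    (C : Matrix (Fin p) (Fin n) ℝ) (D : Matrix (Fin p) (Fin m) ℝ)
    (X : Matrix (Fin n) (Fin n) ℝ)
    (hX : X.PosDef)
    (hDD : (Dᵀ * D).PosDef)
    (hARE : Aᵀ * X + X * A + Cᵀ * C -
      (X * B + Cᵀ * D) * (Dᵀ * D)⁻¹ * (Bᵀ * X + Dᵀ * C) = 0)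
    (F : Matrix (Fin m) (Fin n) ℝ)
    (hF : F = -((Dᵀ * D)⁻¹ * (Bᵀ * X + Dᵀ * C)))
    (hdetect : ∀ (μ : ℂ) (x : Fin n → ℂ),
      0 ≤ μ.re →
      ((A + B * F).map (algebraMap ℝ ℂ)).mulVec x = μ • x →
      ((C + D * F).map (algebraMap ℝ ℂ)).mulVec x = 0 →
      x = 0) :
    ∀ μ ∈ spectrum ℂ ((A + B * F).map (algebraMap ℝ ℂ)), μ.re < 0 := by
  have hXT : Xᵀ = X := by simpa using hX.isHermitian.eq
  have hL := closedLoop_lyapunov_of_riccati hXT hDD.det_pos.ne'.isUnit hARE hF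
  exact fun μ hμ => re_lt_zero_of_mem_spectrum_of_lyapunov hX.posSemidef.map_ofReal
    (lyapunov_map_ofReal hL) hdetect hμ

/-- If `X ≻ 0` solves the ARE, `F` is the LQR gain, and the closed loop
`(C+DF, A+BF)` has no unobservable eigenvector with eigenvalue of nonnegative
real part, then `A + BF` is Hurwitz: every eigenvalue (over `ℂ`) has strictly
negative real part. -/
theorem are_closed_loop_hurwitz
    {n m p : ℕ}
    (A : Matrix (Fin n) (Fin n) ℝ) (B : Matrix (Fin n) (Fin m) ℝ)
    (C : Matrix (Fin p) (Fin n) ℝ) (D : Matrix (Fin p) (Fin m) ℝ)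
    (X : Matrix (Fin n) (Fin n) ℝ)
    (hX : X.PosDef) (hXsymm : X.IsSymm)
    (hDD : (Dᵀ * D).PosDef)
    (hARE : Aᵀ * X + X * A + Cᵀ * C -
      (X * B + Cᵀ * D) * (Dᵀ * D)⁻¹ * (Bᵀ * X + Dᵀ * C) = 0)
    (F : Matrix (Fin m) (Fin n) ℝ)
    (hF : F = -((Dᵀ * D)⁻¹ * (Bᵀ * X + Dᵀ * C)))
    (hdetect : ∀ (μ : ℂ) (x : Fin n → ℂ),
      0 ≤ μ.re →
      ((A + B * F).map (algebraMap ℝ ℂ)).mulVec x = μ • x →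
      ((C + D * F).map (algebraMap ℝ ℂ)).mulVec x = 0 →
      x = 0) :
    ∀ μ ∈ spectrum ℂ ((A + B * F).map (algebraMap ℝ ℂ)), μ.re < 0 :=
  are_closed_loop_hurwitz_general A B C D X hX hDD hARE F hF hdetect
end
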